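/- (Dobinski–Touchard formula, (N-S-Dob).) Let b ∈ ℝ[X] be any polynomial and let N ≥ deg b. For every real number x, the series Σ_{m=0}^{∞} b(m)·x^m/m! converges absolutely and Σ_{m=0}^{∞} b(m)·x^m/m! = e^x · Σ_{k=0}^{N} c_k·x^k, where c_k = Σ_{l=0}^{k} (−1)^{k-l}·b(l)/((k−l)!·l!) is the k-th Newton–Stirling coefficient (the divided difference [0,1,…,k; b] = Δ^k b(0)/k!). -/

import Mathlib

open Finset Polynomial Function
open scoped fwdDiff

private lemma fwd_eval_poly (p : ℝ[X]) :
    fwdDiff (1:ℝ) (fun t : ℝ => p.eval t) = fun t : ℝ => ((taylor 1 p) - p).eval t := by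
  funext y
  simp [fwdDiff, taylor_eval]

private lemma deg_lt_poly (p : ℝ[X]) (hp : p.natDegree ≠ 0) :
    ((taylor 1 p) - p).natDegree < p.natDegree := by
  have hp0 : p ≠ 0 := fun h => hp (by simp [h])
  have ht0 : taylor 1 p ≠ 0 := by
    intro h
    exact hp0 (taylor_injective 1 (by simpa using h))
  have hdeg : (taylor 1 p).degree = p.degree := by
    rw [degree_eq_natDegree ht0, degree_eq_natDegree hp0, natDegree_taylor]
  have hlc : (taylor 1 p).leadingCoeff = p.leadingCoeff := by
    rw [taylor_apply, leadingCoeff_comp (by rw [natDegree_X_add_C]; omega)]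
    rw [(monic_X_add_C (1:ℝ)).leadingCoeff, one_pow, mul_one]
  have hd := degree_sub_lt hdeg ht0 hlc
  rcases eq_or_ne ((taylor 1 p) - p) 0 with h0 | h0
  · rw [h0, natDegree_zero]; exact Nat.pos_of_ne_zero hp
  · have := natDegree_lt_natDegree h0 (by rwa [hdeg] at hd ⊢)
    rwa [natDegree_taylor] at this

private lemma vanish_poly : ∀ n (p : ℝ[X]), p.natDegree ≤ n →
    (fwdDiff (1:ℝ))^[n + 1] (fun t : ℝ => p.eval t) = 0 := by
  intro n
  induction n with
  | zero =>
    intro p hp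
    have : p = C (p.coeff 0) := eq_C_of_natDegree_le_zero hp
    rw [this]
    funext y
    simp [fwdDiff]
  | succ n IH =>
    intro p hp
    rw [iterate_succ_apply, fwd_eval_poly]
    apply IH
    rcases eq_or_ne p.natDegree 0 with h0 | h0
    · have : p = C (p.coeff 0) := eq_C_of_natDegree_le_zero h0.le
      rw [this]
      simp
    · have := deg_lt_poly p h0
      omega

private lemma fwd_zero : fwdDiff (1:ℝ) (0 : ℝ → ℝ) = 0 := by
  funext y; simp [fwdDiff]

/-- Dobinski–Touchard formula, (N-S-Dob): for any polynomial `b`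
and any `N ≥ deg b`, the series `Σ_{m≥0} b(m)·x^m/m!` converges absolutely and
equals `e^x · Σ_{k=0}^{N} c_k·x^k`, where
`c_k = Σ_{l=0}^{k} (−1)^{k-l}·b(l)/((k−l)!·l!)` is the k-th Newton–Stirling
coefficient (the divided difference `[0,1,…,k; b]`). -/
theorem dobinski_touchard (b : Polynomial ℝ) (N : ℕ) (hN : b.natDegree ≤ N) (x : ℝ) :
    (Summable fun m : ℕ => |b.eval (m : ℝ) * x ^ m / (Nat.factorial m : ℝ)|) ∧
    (∑' m : ℕ, b.eval (m : ℝ) * x ^ m / (Nat.factorial m : ℝ)) =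
      Real.exp x * ∑ k ∈ Finset.range (N + 1),
        (∑ l ∈ Finset.range (k + 1),
          (-1 : ℝ) ^ (k - l) * b.eval (l : ℝ) /
            ((Nat.factorial (k - l) : ℝ) * (Nat.factorial l : ℝ))) * x ^ k := by
  set f : ℝ → ℝ := fun t : ℝ => b.eval t with hf
  set D : ℕ → ℝ := fun k => (fwdDiff (1:ℝ))^[k] f 0 with hD
  set c : ℕ → ℝ := fun k => ∑ l ∈ Finset.range (k + 1),
      (-1 : ℝ) ^ (k - l) * b.eval (l : ℝ) /
        ((Nat.factorial (k - l) : ℝ) * (Nat.factorial l : ℝ)) with hc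
  -- D vanishes above N
  have hDvanish : ∀ k, N < k → D k = 0 := by
    intro k hk
    have h1 : (fwdDiff (1:ℝ))^[b.natDegree + 1] f = 0 := vanish_poly b.natDegree b le_rfl
    obtain ⟨j, rfl⟩ : ∃ j, k = j + (b.natDegree + 1) := ⟨k - (b.natDegree + 1), by omega⟩
    simp only [hD, iterate_add_apply, h1]
    rw [iterate_fixed fwd_zero]
    rfl
  -- Newton formula at natural numbers
  have hNewton : ∀ m : ℕ, b.eval (m : ℝ) = ∑ k ∈ range (N + 1), (m.choose k : ℝ) * D k := by
    intro m
    have h1 := shift_eq_sum_fwdDiff_iter (1:ℝ) f m 0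
    simp only [zero_add, nsmul_eq_mul, mul_one, smul_eq_mul] at h1
    have h2 : b.eval (m : ℝ) = ∑ k ∈ range (m + 1), (m.choose k : ℝ) * D k := h1
    rw [h2]
    rcases le_total m N with hmN | hNm
    · apply sum_subset (by intro t ht; simp only [mem_range] at *; omega)
      intro k hk hk'
      simp only [mem_range] at hk hk'
      have : m < k := by omega
      simp [Nat.choose_eq_zero_of_lt this]
    · symm
      apply sum_subset (by intro t ht; simp only [mem_range] at *; omega)
      intro k hk hk'
      simp only [mem_range] at hk hk'
      rw [hDvanish k (by omega), mul_zero]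
  -- D k = k! * c k
  have hDc : ∀ k, D k = (Nat.factorial k : ℝ) * c k := by
    intro k
    have h1 := fwdDiff_iter_eq_sum_shift (1:ℝ) f k 0
    simp only [zero_add, nsmul_eq_mul, mul_one, zsmul_eq_mul, Int.cast_mul, Int.cast_pow,
      Int.cast_neg, Int.cast_one, Int.cast_natCast] at h1
    have h1' : D k = ∑ l ∈ range (k + 1), (-1:ℝ) ^ (k - l) * (k.choose l : ℝ) * f (l : ℝ) := h1
    rw [h1', hc, mul_sum]
    apply sum_congr rfl
    intro l hl
    simp only [mem_range] at hl
    have hlk : l ≤ k := by omega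
    rw [Nat.cast_choose ℝ hlk]
    have h2 : (Nat.factorial l : ℝ) ≠ 0 := Nat.cast_ne_zero.mpr (Nat.factorial_ne_zero l)
    have h3 : (Nat.factorial (k - l) : ℝ) ≠ 0 := Nat.cast_ne_zero.mpr (Nat.factorial_ne_zero _)
    field_simp
    ring
  -- the shifted exponential pieces
  set e : ℕ → ℕ → ℝ := fun k m => if k ≤ m then x ^ m / (Nat.factorial (m - k) : ℝ) else 0
    with he
  have habs_e : ∀ k, Summable fun m => |e k m| := by
    intro k
    apply (summable_nat_add_iff k).mp
    apply Summable.congr ((Real.summable_pow_div_factorial |x|).mul_left (|x| ^ k))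
    intro n
    simp only [he, if_pos (Nat.le_add_left k n), Nat.add_sub_cancel]
    rw [abs_div, abs_pow, Nat.abs_cast, pow_add, mul_comm (|x|^n), mul_div_assoc]
  have hsum_e : ∀ k, Summable (e k) := fun k => summable_abs_iff.mp (habs_e k)
  have hexp : Real.exp x = ∑' n : ℕ, x ^ n / (Nat.factorial n : ℝ) := by
    rw [Real.exp_eq_exp_ℝ, NormedSpace.exp_eq_tsum_div]
  have htsum_e : ∀ k, ∑' m, e k m = x ^ k * Real.exp x := by
    intro k
    rw [← Summable.sum_add_tsum_nat_add k (hsum_e k)]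
    have h0 : ∑ i ∈ range k, e k i = 0 := by
      apply sum_eq_zero
      intro i hi
      simp only [mem_range] at hi
      simp [he, Nat.not_le.mpr hi]
    rw [h0, zero_add]
    have h1 : ∀ i : ℕ, e k (i + k) = x ^ k * (x ^ i / (Nat.factorial i : ℝ)) := by
      intro i
      simp only [he, if_pos (Nat.le_add_left k i), Nat.add_sub_cancel]
      rw [pow_add, mul_comm (x ^ i), mul_div_assoc]
    rw [tsum_congr h1, tsum_mul_left, hexp]
  -- pointwise identity
  have hpt : ∀ m : ℕ, b.eval (m : ℝ) * x ^ m / (Nat.factorial m : ℝ) =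
      ∑ k ∈ range (N + 1), (D k / (Nat.factorial k : ℝ)) * e k m := by
    intro m
    rw [hNewton m, sum_mul, sum_div]
    apply sum_congr rfl
    intro k _
    rcases le_or_gt k m with hkm | hkm
    · simp only [he, if_pos hkm]
      rw [Nat.cast_choose ℝ hkm]
      have h2 : (Nat.factorial k : ℝ) ≠ 0 := Nat.cast_ne_zero.mpr (Nat.factorial_ne_zero k)
      have h3 : (Nat.factorial (m - k) : ℝ) ≠ 0 := Nat.cast_ne_zero.mpr (Nat.factorial_ne_zero _)
      have h4 : (Nat.factorial m : ℝ) ≠ 0 := Nat.cast_ne_zero.mpr (Nat.factorial_ne_zero m)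
      field_simp
    · simp [he, Nat.not_le.mpr hkm, Nat.choose_eq_zero_of_lt hkm]
  -- summability
  have hbound : Summable fun m : ℕ =>
      ∑ k ∈ range (N + 1), |D k / (Nat.factorial k : ℝ)| * |e k m| := by
    apply summable_sum
    intro k _
    exact (habs_e k).mul_left _
  have hsum : Summable fun m : ℕ => |b.eval (m : ℝ) * x ^ m / (Nat.factorial m : ℝ)| := by
    apply Summable.of_nonneg_of_le (fun m => abs_nonneg _) _ hbound
    intro m
    rw [hpt m]
    refine (Finset.abs_sum_le_sum_abs _ _).trans ?_
    apply sum_le_sum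
    intro k _
    rw [abs_mul]
  refine ⟨hsum, ?_⟩
  have hterm : ∀ k ∈ range (N + 1),
      Summable fun m : ℕ => (D k / (Nat.factorial k : ℝ)) * e k m := by
    intro k _
    exact (hsum_e k).mul_left _
  calc (∑' m : ℕ, b.eval (m : ℝ) * x ^ m / (Nat.factorial m : ℝ))
      = ∑' m : ℕ, ∑ k ∈ range (N + 1), (D k / (Nat.factorial k : ℝ)) * e k m :=
        tsum_congr hpt
    _ = ∑ k ∈ range (N + 1), ∑' m : ℕ, (D k / (Nat.factorial k : ℝ)) * e k m :=
        Summable.tsum_finsetSum hterm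
    _ = ∑ k ∈ range (N + 1), (D k / (Nat.factorial k : ℝ)) * (x ^ k * Real.exp x) := by
        apply sum_congr rfl
        intro k _
        rw [tsum_mul_left, htsum_e k]
    _ = Real.exp x * ∑ k ∈ range (N + 1), c k * x ^ k := by
        rw [mul_sum]
        apply sum_congr rfl
        intro k _
        rw [hDc k]
        have h2 : (Nat.factorial k : ℝ) ≠ 0 := Nat.cast_ne_zero.mpr (Nat.factorial_ne_zero k)
        field_simp
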